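/- Let s be a finite shift-bounded binary word, and let α be a prefix and γ a suffix of s with 0 < |α| = |γ| < |s|. Then α* ≥ γ > α and α* > γ̃ ≥ α, where α* is the bitwise complement of α and γ̃ is γ with its last symbol inverted. -/

import Mathlib

open Filter MeasureTheory

/-- Left shift by `k` on infinite binary sequences. -/
def shiftSeq (k : ℕ) (x : ℕ → Bool) : ℕ → Bool := fun n => x (n + k)

/-- Strict lexicographic order on infinite binary sequences (`false < true`). -/
def seqLt (a b : ℕ → Bool) : Prop :=
  ∃ n, (∀ k < n, a k = b k) ∧ a n = false ∧ b n = true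

def seqLe (a b : ℕ → Bool) : Prop := a = b ∨ seqLt a b

/-- A finite word viewed as an infinite sequence (padded with zeros). -/
def wordSeq (w : List Bool) : ℕ → Bool := fun n => w.getD n false

/-- Bitwise complement of an infinite sequence. -/
def complSeq (a : ℕ → Bool) : ℕ → Bool := fun n => ! a n

/-- `F(c) = {x : c' ≥ σⁿ(x) ≥ c for all n ≥ 0}` for an infinite bound `c`. -/
def Fset (c : ℕ → Bool) : Set (ℕ → Bool) :=
  {x | ∀ n : ℕ, seqLe c (shiftSeq n x) ∧ seqLe (shiftSeq n x) (complSeq c)}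

/-- The real number in `[0,1]` with binary expansion `x`. -/
noncomputable def seqVal (x : ℕ → Bool) : ℝ :=
  ∑' n : ℕ, (cond (x n) (1 : ℝ) 0) / 2 ^ (n + 1)

/-- The periodic infinite sequence `w^∞`. -/
def perSeq (w : List Bool) : ℕ → Bool := fun n => w.getD (n % w.length) false

/-- `s̃`: the word `s` with its last symbol inverted. -/
def flipLast (s : List Bool) : List Bool :=
  s.dropLast ++ [! s.getD (s.length - 1) false]

/-- `f(s) = s̃ s'` where `s'` is the bitwise complement of `s`. -/
def fW (s : List Bool) : List Bool := flipLast s ++ s.map (fun b => !b)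

/-- A finite word `s` is shift-bounded: `s' > σⁿ(s) > s` for `0 < n < |s|`,
comparisons via the embedding of finite words into infinite sequences
(`s` padded with zeros, `s'` is the complement of the padded sequence);
by convention `[false]` is excluded. -/
def ShiftBounded (s : List Bool) : Prop :=
  s ≠ [false] ∧ ∀ n, 0 < n → n < s.length →
    seqLt (wordSeq s) (wordSeq (s.drop n)) ∧
    seqLt (wordSeq (s.drop n)) (complSeq (wordSeq s))

/-- Prepend a finite word to an infinite sequence. -/
def appendSeq (w : List Bool) (t : ℕ → Bool) : ℕ → Bool :=
  fun n => if n < w.length then w.getD n false else t (n - w.length)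

/-- `w^k`: the word `w` repeated `k` times. -/
def repWord (k : ℕ) (w : List Bool) : List Bool :=
  (List.replicate k w).foldr (· ++ ·) []

/-- The infinite concatenation of the finite words `g 0, g 1, g 2, …`
(assuming all are nonempty, the `n`-th symbol is obtained from the first
`n+1` blocks). -/
def concatSeq (g : ℕ → List Bool) : ℕ → Bool :=
  fun n => (((List.range (n + 1)).map g).foldr (· ++ ·) []).getD n false

/-! Finite words are compared as zero-padded sequences, i.e. in the lexicographic order on
`ℕ → Bool`. Shift-boundedness at `n = |s| - m` gives `s < γ < s'`. Truncating a sequence to its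
first `m` symbols decreases it and is monotone, so `α ≤ s < γ` and `γ ≤ α*`. The shift by
`|s| - 1` shows that `s`, hence `γ`, ends in `1`; then `γ̃` is the immediate predecessor of `γ`
among words of length `m`, which turns `γ ≤ α*` into `γ̃ < α*` and `α < γ` into `α ≤ γ̃`. -/

open Function

lemma seqLt_iff_toLex_lt {a b : ℕ → Bool} : seqLt a b ↔ toLex a < toLex b := by
  show _ ↔ ∃ i, (∀ j < i, a j = b j) ∧ a i < b i
  simp only [seqLt, Bool.lt_iff]

lemma seqLe_iff_toLex_le {a b : ℕ → Bool} : seqLe a b ↔ toLex a ≤ toLex b := by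
  rw [seqLe, seqLt_iff_toLex_lt, le_iff_eq_or_lt, toLex_inj]
  exact Iff.rfl

lemma wordSeq_of_length_le {w : List Bool} {k : ℕ} (h : w.length ≤ k) : wordSeq w k = false :=
  List.getD_eq_default _ _ h

lemma wordSeq_drop (w : List Bool) (j k : ℕ) : wordSeq (w.drop j) k = wordSeq w (j + k) := by
  simp [wordSeq, List.getD_eq_getElem?_getD]

def truncSeq (m : ℕ) (a : ℕ → Bool) : ℕ → Bool := fun k => if k < m then a k else false

lemma toLex_truncSeq_le (m : ℕ) (a : ℕ → Bool) : toLex (truncSeq m a) ≤ toLex a :=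
  Pi.toLex_monotone fun k => by unfold truncSeq; split_ifs <;> simp

lemma toLex_truncSeq_mono (m : ℕ) {a b : ℕ → Bool} (h : toLex a ≤ toLex b) :
    toLex (truncSeq m a) ≤ toLex (truncSeq m b) := by
  rcases h.eq_or_lt with h | ⟨n, hn, hlt⟩
  · rw [toLex_inj.1 h]
  simp only [Pi.toLex_apply] at hn hlt
  by_cases hnm : n < m
  · exact le_of_lt ⟨n, fun j hj => by simp [truncSeq, hn j hj], by simpa [truncSeq, hnm] using hlt⟩
  · refine le_of_eq (congrArg toLex (funext fun k => ?_))
    by_cases hk : k < m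
    · simp [truncSeq, hk, hn k (by omega)]
    · simp [truncSeq, hk]

lemma truncSeq_length_wordSeq (w : List Bool) : truncSeq w.length (wordSeq w) = wordSeq w := by
  funext k
  by_cases hk : k < w.length
  · simp [truncSeq, hk]
  · simp [truncSeq, hk, wordSeq]

lemma wordSeq_take (w : List Bool) (m : ℕ) : wordSeq (w.take m) = truncSeq m (wordSeq w) := by
  funext k
  by_cases hk : k < m <;> simp [wordSeq, truncSeq, hk, List.getD_eq_getElem?_getD]

lemma wordSeq_map_not_take {w : List Bool} {m : ℕ} (h : m ≤ w.length) :
    wordSeq ((w.take m).map (fun b => !b)) = truncSeq m (complSeq (wordSeq w)) := by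
  funext k
  by_cases hk : k < m
  · simp [wordSeq, truncSeq, complSeq, hk, List.getD_eq_getElem?_getD,
      List.getElem?_eq_getElem (show k < w.length by omega)]
  · simp [wordSeq, truncSeq, hk, List.getD_eq_getElem?_getD]

lemma wordSeq_flipLast {w : List Bool} (hw : w ≠ []) :
    wordSeq (flipLast w) = update (wordSeq w) (w.length - 1) (!wordSeq w (w.length - 1)) := by
  have hpos : 0 < w.length := List.length_pos_iff.2 hw
  funext k
  rcases lt_trichotomy k (w.length - 1) with hk | rfl | hk
  · simp [wordSeq, flipLast, update, hk.ne, List.getD_eq_getElem?_getD, List.getElem?_append_left,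
      hk, List.dropLast_eq_take, List.getElem?_eq_getElem (show k < w.length by omega)]
  · simp [wordSeq, flipLast, List.getD_eq_getElem?_getD]
  · have hflip : (flipLast w).length ≤ k := by
      simp only [flipLast, List.length_append, List.length_dropLast, List.length_singleton]
      omega
    rw [update_of_ne hk.ne', wordSeq_of_length_le hflip, wordSeq_of_length_le (by omega)]

lemma toLex_le_update_of_lt {a b : ℕ → Bool} {i : ℕ} (ha : ∀ k, i < k → a k = false)
    (hb : ∀ k, i < k → b k = false) (hbi : b i = true) (h : toLex a < toLex b) :
    toLex a ≤ toLex (update b i false) := by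
  obtain ⟨n, hn, hlt⟩ := h
  simp only [Pi.toLex_apply, Bool.lt_iff] at hn hlt
  obtain ⟨han, hbn⟩ := hlt
  have hni : n ≤ i := by
    by_contra! hin
    simp [hb n hin] at hbn
  rcases hni.lt_or_eq with hni | rfl
  · refine le_of_lt ⟨n, fun j (hj : j < n) => ?_, ?_⟩
    · simp [update_of_ne (show j ≠ i by omega), hn j hj]
    · simp [update_of_ne hni.ne, han, hbn]
  · refine le_of_eq (congrArg toLex (funext fun k => ?_))
    rcases lt_trichotomy k n with hk | rfl | hk
    · simp [update_of_ne hk.ne, hn k hk]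
    · simp [han]
    · simp [update_of_ne hk.ne', ha k hk, hb k hk]

lemma ShiftBounded.wordSeq_length_sub_one {s : List Bool} (hs : ShiftBounded s)
    (hL : 1 < s.length) : wordSeq s (s.length - 1) = true := by
  obtain ⟨n, -, -, hn⟩ := (hs.2 (s.length - 1) (by omega) (by omega)).1
  rw [wordSeq_drop] at hn
  obtain rfl : n = 0 := by
    by_contra h
    rw [wordSeq_of_length_le (by omega)] at hn
    exact Bool.false_ne_true hn
  exact hn

theorem stmt6 (s : List Bool) (hs : ShiftBounded s) (m : ℕ) (h0 : 0 < m)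
    (hm : m < s.length) :
    seqLe (wordSeq (s.drop (s.length - m))) (wordSeq ((s.take m).map (fun b => !b))) ∧
    seqLt (wordSeq (s.take m)) (wordSeq (s.drop (s.length - m))) ∧
    seqLt (wordSeq (flipLast (s.drop (s.length - m))))
      (wordSeq ((s.take m).map (fun b => !b))) ∧
    seqLe (wordSeq (s.take m)) (wordSeq (flipLast (s.drop (s.length - m)))) := by
  set γ := s.drop (s.length - m)
  have hγ : γ.length = m := by simp only [γ, List.length_drop]; omega
  have hlast : wordSeq γ (m - 1) = true := by
    rw [wordSeq_drop, show s.length - m + (m - 1) = s.length - 1 by omega]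
    exact hs.wordSeq_length_sub_one (by omega)
  obtain ⟨hlow, hupp⟩ := hs.2 (s.length - m) (by omega) (by omega)
  rw [seqLt_iff_toLex_lt] at hlow hupp
  have hα : toLex (wordSeq (s.take m)) < toLex (wordSeq γ) := by
    rw [wordSeq_take]
    exact (toLex_truncSeq_le m _).trans_lt hlow
  have hαc : toLex (wordSeq γ) ≤ toLex (wordSeq ((s.take m).map (fun b => !b))) := by
    rw [wordSeq_map_not_take hm.le, ← truncSeq_length_wordSeq γ, hγ]
    exact toLex_truncSeq_mono m hupp.le
  have hflip : wordSeq (flipLast γ) = update (wordSeq γ) (m - 1) false := by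
    rw [wordSeq_flipLast (List.ne_nil_of_length_pos (by omega)), hγ, hlast]
    rfl
  have hflip_lt : toLex (wordSeq (flipLast γ)) < toLex (wordSeq γ) := by
    rw [hflip]
    exact Pi.toLex_update_lt_self_iff.2 (by simp [hlast])
  simp only [seqLe_iff_toLex_le, seqLt_iff_toLex_lt]
  refine ⟨hαc, hα, hflip_lt.trans_le hαc, ?_⟩
  rw [hflip]
  exact toLex_le_update_of_lt (fun k hk => wordSeq_of_length_le (by simp only [List.length_take]; omega))
    (fun k hk => wordSeq_of_length_le (by omega)) hlast hα
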